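/- arXiv:2201.12134 — 3 statements merged into one kernel-verified Lean document; each statement's English description precedes it below -/
import Mathlib

section
/- Let q : ℕ → ℝ be nonnegative and nonincreasing with q_1 > 0, let s : ℕ → ℝ, set Q_n := ∑_{j=1}^{n-1} q_j and σ_j := (1/j)·∑_{k=1}^{j} s_k. Then for every n ≥ 2, |(1/Q_n)·∑_{j=1}^{n-1} q_j s_j| ≤ sup_{1 ≤ j ≤ n-1} |σ_j|. -/
/-!
Abel summation: with `S_j = s_1 + ⋯ + s_j`,
`∑_{j ≤ m} q_j s_j = ∑_{j < m} (q_j - q_{j+1}) S_j + q_m S_m`.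
If `|S_j| ≤ j M`, the weights `q_j - q_{j+1}` and `q_m` are nonnegative, so the right-hand side is
at most `M (∑_{j < m} (q_j - q_{j+1}) j + q_m m) = M ∑_{j ≤ m} q_j`.
Dividing by `∑ q_j` gives the claim; if that sum is `0`, the left side is `0` since `1 / 0 = 0`.
-/

open Finset

/-- The left side equals `|∑_{j ≤ m} (q_j - q_{j+1}) S_j|`, a sum with nonnegative weights. -/
lemma abs_sum_mul_sub_mul_sum_le (q s : ℕ → ℝ) (hmono : ∀ j, q (j + 1) ≤ q j) (M : ℝ) (m : ℕ)
    (hS : ∀ j ∈ Icc 1 m, |∑ k ∈ Icc 1 j, s k| ≤ j * M) :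
    |∑ j ∈ Icc 1 m, q j * s j - q (m + 1) * ∑ k ∈ Icc 1 m, s k|
      ≤ M * (∑ j ∈ Icc 1 m, q j - m * q (m + 1)) := by
  induction m with
  | zero => simp
  | succ m ih =>
    have ih := ih fun j hj => hS j (Icc_subset_Icc_right m.le_succ hj)
    have hS_succ := hS (m + 1) (right_mem_Icc.mpr m.succ_pos)
    have hdrop : 0 ≤ q (m + 1) - q (m + 2) := sub_nonneg.mpr (hmono (m + 1))
    set S := ∑ k ∈ Icc 1 (m + 1), s k
    have hsplit : ∑ j ∈ Icc 1 (m + 1), q j * s j - q (m + 2) * S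
        = (∑ j ∈ Icc 1 m, q j * s j - q (m + 1) * ∑ k ∈ Icc 1 m, s k)
          + (q (m + 1) - q (m + 2)) * S := by
      simp only [S, sum_Icc_succ_top (Nat.le_add_left 1 m)]
      ring
    calc |∑ j ∈ Icc 1 (m + 1), q j * s j - q (m + 2) * S|
        ≤ |∑ j ∈ Icc 1 m, q j * s j - q (m + 1) * ∑ k ∈ Icc 1 m, s k|
          + (q (m + 1) - q (m + 2)) * |S| := by
          rw [hsplit, ← abs_of_nonneg hdrop, ← abs_mul, abs_of_nonneg hdrop]
          exact abs_add_le _ _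
      _ ≤ M * (∑ j ∈ Icc 1 m, q j - m * q (m + 1)) + (q (m + 1) - q (m + 2)) * ((m + 1 : ℕ) * M) :=
          add_le_add ih (mul_le_mul_of_nonneg_left hS_succ hdrop)
      _ = M * (∑ j ∈ Icc 1 (m + 1), q j - (m + 1 : ℕ) * q (m + 1 + 1)) := by
          rw [sum_Icc_succ_top (Nat.le_add_left 1 m)]
          push_cast
          ring

lemma abs_sum_mul_le_of_abs_partialSum_le (q s : ℕ → ℝ) (hq0 : ∀ j, 0 ≤ q j)
    (hmono : ∀ j, q (j + 1) ≤ q j) (M : ℝ) (m : ℕ)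
    (hS : ∀ j ∈ Icc 1 m, |∑ k ∈ Icc 1 j, s k| ≤ j * M) :
    |∑ j ∈ Icc 1 m, q j * s j| ≤ M * ∑ j ∈ Icc 1 m, q j := by
  have hrem := abs_sum_mul_sub_mul_sum_le q s hmono M m hS
  have htail : |q (m + 1) * ∑ k ∈ Icc 1 m, s k| ≤ q (m + 1) * (m * M) := by
    rw [abs_mul, abs_of_nonneg (hq0 (m + 1))]
    rcases m.eq_zero_or_pos with rfl | hm
    · simp
    · exact mul_le_mul_of_nonneg_left (hS m (right_mem_Icc.mpr hm)) (hq0 (m + 1))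
  calc |∑ j ∈ Icc 1 m, q j * s j|
      ≤ |∑ j ∈ Icc 1 m, q j * s j - q (m + 1) * ∑ k ∈ Icc 1 m, s k|
        + |q (m + 1) * ∑ k ∈ Icc 1 m, s k| := by
        simpa only [sub_add_cancel] using abs_add_le
          (∑ j ∈ Icc 1 m, q j * s j - q (m + 1) * ∑ k ∈ Icc 1 m, s k)
          (q (m + 1) * ∑ k ∈ Icc 1 m, s k)
    _ ≤ M * (∑ j ∈ Icc 1 m, q j - m * q (m + 1)) + q (m + 1) * (m * M) := add_le_add hrem htail
    _ = M * ∑ j ∈ Icc 1 m, q j := by ring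

lemma abs_le_mul_of_abs_one_div_mul_le {x j M : ℝ} (hj : 0 < j) (h : |1 / j * x| ≤ M) :
    |x| ≤ j * M := by
  rwa [abs_mul, abs_of_pos (one_div_pos.mpr hj), one_div_mul_eq_div, div_le_iff₀ hj,
    mul_comm] at h

theorem Tmean_dominated_by_Fejer_max_nonincreasing
    (q : ℕ → ℝ) (hq0 : ∀ j, 0 ≤ q j) (hmono : ∀ j, q (j+1) ≤ q j)
    (s : ℕ → ℝ) (n : ℕ) (hn : 2 ≤ n) :
    |(1 / (∑ j ∈ Finset.Icc 1 (n-1), q j)) * ∑ j ∈ Finset.Icc 1 (n-1), q j * s j| ≤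
      (Finset.Icc 1 (n-1)).sup' (Finset.nonempty_Icc.mpr (by omega))
        (fun j => |(1 / (j : ℝ)) * ∑ k ∈ Finset.Icc 1 j, s k|) := by
  set M := (Icc 1 (n - 1)).sup' (nonempty_Icc.mpr (by omega))
    (fun j => |(1 / (j : ℝ)) * ∑ k ∈ Icc 1 j, s k|)
  have hM_ge : ∀ j ∈ Icc 1 (n - 1), |(1 / (j : ℝ)) * ∑ k ∈ Icc 1 j, s k| ≤ M :=
    fun j hj => le_sup' (fun j : ℕ => |(1 / (j : ℝ)) * ∑ k ∈ Icc 1 j, s k|) hj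
  have hM0 : 0 ≤ M := (abs_nonneg _).trans (hM_ge 1 (left_mem_Icc.mpr (by omega)))
  have hS : ∀ j ∈ Icc 1 (n - 1), |∑ k ∈ Icc 1 j, s k| ≤ j * M := fun j hj =>
    abs_le_mul_of_abs_one_div_mul_le (by exact_mod_cast (mem_Icc.mp hj).1) (hM_ge j hj)
  have hQ0 : 0 ≤ ∑ j ∈ Icc 1 (n - 1), q j := sum_nonneg fun j _ => hq0 j
  rw [abs_mul, abs_of_nonneg (one_div_nonneg.mpr hQ0), one_div_mul_eq_div]
  exact div_le_of_le_mul₀ hQ0 hM0 (abs_sum_mul_le_of_abs_partialSum_le q s hq0 hmono M _ hS)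
end

section
/- Let 0 < p < 1/2 and let M : ℕ → ℝ satisfy M_0 ≥ 1 and M_{l+1} ≥ 2·M_l for all l. Then there exists a constant C_p > 0 depending only on p such that for every N ≥ 2, ∑_{k=0}^{N-2} ∑_{l=k+1}^{N-1} (M_l · M_k)^p / M_l ≤ C_p. -/
/-!
Doubling gives `M l ≥ 2^(l-k) M k` and `M k ≥ 2^k`, so the kernel term
`M l^(p-1) M k^p` is at most `(2^(p-1))^(l-k) (2^(2p-1))^k`. For `p < 1/2` both ratios are
below `1`, and the double sum is dominated by a product of two geometric series.
-/

open Finset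

section Doubling

variable {M : ℕ → ℝ}

lemma two_pow_mul_le_of_doubling (hstep : ∀ l, 2 * M l ≤ M (l + 1)) (k j : ℕ) :
    2 ^ j * M k ≤ M (k + j) := by
  induction j with
  | zero => simp
  | succ j ih =>
    calc (2 : ℝ) ^ (j + 1) * M k = 2 * (2 ^ j * M k) := by ring
      _ ≤ 2 * M (k + j) := by gcongr
      _ ≤ M (k + (j + 1)) := hstep (k + j)

lemma two_pow_le_of_doubling (h0 : 1 ≤ M 0) (hstep : ∀ l, 2 * M l ≤ M (l + 1)) (k : ℕ) :
    2 ^ k ≤ M k :=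
  calc (2 : ℝ) ^ k ≤ 2 ^ k * M 0 := le_mul_of_one_le_right (by positivity) h0
    _ ≤ M k := by simpa using two_pow_mul_le_of_doubling hstep 0 k

end Doubling

lemma rpow_mul_div_le_of_two_pow_le {p x y : ℝ} {j k : ℕ} (hp : p ≤ 1 / 2)
    (hx : 2 ^ k ≤ x) (hxy : 2 ^ j * x ≤ y) :
    (y * x) ^ p / y ≤ ((2 : ℝ) ^ (2 * p - 1)) ^ k * ((2 : ℝ) ^ (p - 1)) ^ j := by
  have hx0 : 0 < x := lt_of_lt_of_le (by positivity) hx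
  have hy0 : 0 < y := lt_of_lt_of_le (by positivity) hxy
  have hsplit : (y * x) ^ p / y = y ^ (p - 1) * x ^ p := by
    rw [Real.mul_rpow hy0.le hx0.le, Real.rpow_sub hy0, Real.rpow_one]
    ring
  have hy : y ^ (p - 1) ≤ ((2 : ℝ) ^ (p - 1)) ^ j * x ^ (p - 1) := by
    rw [Real.rpow_pow_comm zero_le_two, ← Real.mul_rpow (by positivity) hx0.le]
    exact Real.rpow_le_rpow_of_nonpos (by positivity) hxy (by linarith)
  have hx' : x ^ (2 * p - 1) ≤ ((2 : ℝ) ^ (2 * p - 1)) ^ k := by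
    rw [Real.rpow_pow_comm zero_le_two]
    exact Real.rpow_le_rpow_of_nonpos (by positivity) hx (by linarith)
  calc (y * x) ^ p / y = y ^ (p - 1) * x ^ p := hsplit
    _ ≤ ((2 : ℝ) ^ (p - 1)) ^ j * x ^ (p - 1) * x ^ p := by gcongr
    _ = ((2 : ℝ) ^ (p - 1)) ^ j * x ^ (2 * p - 1) := by
      rw [mul_assoc, ← Real.rpow_add hx0]
      ring_nf
    _ ≤ ((2 : ℝ) ^ (p - 1)) ^ j * ((2 : ℝ) ^ (2 * p - 1)) ^ k := by gcongr
    _ = ((2 : ℝ) ^ (2 * p - 1)) ^ k * ((2 : ℝ) ^ (p - 1)) ^ j := mul_comm ..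

lemma sum_pow_le_of_injOn {r : ℝ} (h0 : 0 ≤ r) (h1 : r < 1) {s : Finset ℕ} {g : ℕ → ℕ}
    (hg : Set.InjOn g s) : ∑ i ∈ s, r ^ g i ≤ (1 - r)⁻¹ := by
  rw [← sum_image hg]
  exact sum_le_hasSum _ (fun i _ => pow_nonneg h0 i) (hasSum_geometric_of_lt_one h0 h1)

lemma sum_sum_geometric_le {r s : ℝ} (hr0 : 0 ≤ r) (hr1 : r < 1) (hs0 : 0 ≤ s) (hs1 : s < 1)
    (n m : ℕ) :
    ∑ k ∈ range n, ∑ l ∈ Icc (k + 1) m, s ^ k * r ^ (l - k) ≤ (1 - s)⁻¹ * (1 - r)⁻¹ := by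
  have hinner (k : ℕ) : ∑ l ∈ Icc (k + 1) m, r ^ (l - k) ≤ (1 - r)⁻¹ :=
    sum_pow_le_of_injOn hr0 hr1 fun a ha b hb hab => by
      simp only [coe_Icc, Set.mem_Icc] at ha hb
      omega
  calc ∑ k ∈ range n, ∑ l ∈ Icc (k + 1) m, s ^ k * r ^ (l - k)
      = ∑ k ∈ range n, s ^ k * ∑ l ∈ Icc (k + 1) m, r ^ (l - k) := by simp_rw [mul_sum]
    _ ≤ ∑ k ∈ range n, s ^ k * (1 - r)⁻¹ := by gcongr with k; exact hinner k
    _ = (∑ k ∈ range n, s ^ k) * (1 - r)⁻¹ := (sum_mul ..).symm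
    _ ≤ (1 - s)⁻¹ * (1 - r)⁻¹ := by
      gcongr
      exact sum_pow_le_of_injOn hs0 hs1 Function.injective_id.injOn

theorem double_sum_kernel_estimate_general (p : ℝ) (hp2 : p < 1/2) :
    ∃ C : ℝ, 0 < C ∧ ∀ M : ℕ → ℝ, 1 ≤ M 0 → (∀ l, 2 * M l ≤ M (l+1)) →
      ∀ N : ℕ, 2 ≤ N →
        ∑ k ∈ Finset.range (N-1), ∑ l ∈ Finset.Icc (k+1) (N-1),
          (M l * M k) ^ p / M l ≤ C := by
  set r : ℝ := 2 ^ (p - 1)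
  set s : ℝ := 2 ^ (2 * p - 1)
  have hr1 : r < 1 := Real.rpow_lt_one_of_one_lt_of_neg one_lt_two (by linarith)
  have hs1 : s < 1 := Real.rpow_lt_one_of_one_lt_of_neg one_lt_two (by linarith)
  refine ⟨(1 - s)⁻¹ * (1 - r)⁻¹,
    mul_pos (inv_pos.2 (sub_pos.2 hs1)) (inv_pos.2 (sub_pos.2 hr1)), ?_⟩
  intro M h0 hstep N _
  calc ∑ k ∈ range (N - 1), ∑ l ∈ Icc (k + 1) (N - 1), (M l * M k) ^ p / M l
      ≤ ∑ k ∈ range (N - 1), ∑ l ∈ Icc (k + 1) (N - 1), s ^ k * r ^ (l - k) := by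
        gcongr with k _ l hl
        refine rpow_mul_div_le_of_two_pow_le hp2.le (two_pow_le_of_doubling h0 hstep k) ?_
        simpa [Nat.add_sub_cancel' (Nat.le_of_succ_le (mem_Icc.1 hl).1)] using
          two_pow_mul_le_of_doubling hstep k (l - k)
    _ ≤ (1 - s)⁻¹ * (1 - r)⁻¹ := sum_sum_geometric_le (by positivity) hr1 (by positivity) hs1 _ _

theorem double_sum_kernel_estimate (p : ℝ) (hp : 0 < p) (hp2 : p < 1/2) :
    ∃ C : ℝ, 0 < C ∧ ∀ M : ℕ → ℝ, 1 ≤ M 0 → (∀ l, 2 * M l ≤ M (l+1)) →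
      ∀ N : ℕ, 2 ≤ N →
        ∑ k ∈ Finset.range (N-1), ∑ l ∈ Finset.Icc (k+1) (N-1),
          (M l * M k) ^ p / M l ≤ C :=
  double_sum_kernel_estimate_general p hp2
end

section
/- With the Walsh functions w_k and Dirichlet kernels D_m(x) = ∑_{k=0}^{m-1} w_k(x) as above, for every n : ℕ, every j < 2^n, and every x : ℕ → ZMod 2, D_{2^n − j}(x) = D_{2^n}(x) − w_{2^n − 1}(x) · D_j(x). -/
/-- Walsh–Paley function on the dyadic group, as an integer-valued function. -/
def walsh (k : ℕ) (x : ℕ → ZMod 2) : ℤ :=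
  (-1) ^ (∑ i ∈ Finset.range k.size, (if k.testBit i then 1 else 0) * (x i).val)

/-- Walsh–Dirichlet kernel `D_m = ∑_{k<m} w_k`. -/
def walshDirichlet (m : ℕ) (x : ℕ → ZMod 2) : ℤ :=
  ∑ k ∈ Finset.range m, walsh k x

/-
The indices `2^n - j ≤ k < 2^n` missing from `D_{2^n - j}` are, after the reflection
`k = 2^n - 1 - i`, exactly the indices `i < j`. For `i < 2^n`, subtracting `i` from the all-ones
number `2^n - 1` flips the bits of `i`, so `2^n - 1 - i = (2^n - 1) XOR i`, and Walsh functions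
turn XOR of indices into products: `w_{2^n - 1 - i} = w_{2^n - 1} w_i`.
-/

theorem Nat.two_pow_sub_one_xor {n i : ℕ} (hi : i < 2 ^ n) :
    (2 ^ n - 1) ^^^ i = 2 ^ n - 1 - i := by
  apply Nat.eq_of_testBit_eq
  intro t
  rw [Nat.testBit_xor, Nat.testBit_two_pow_sub_one,
    show 2 ^ n - 1 - i = 2 ^ n - (i + 1) by omega, Nat.testBit_two_pow_sub_succ hi t]
  by_cases ht : t < n
  · cases i.testBit t <;> simp [ht]
  · have hbit : i.testBit t = false :=
      Nat.testBit_lt_two_pow (hi.trans_le (Nat.pow_le_pow_right two_pos (by omega)))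
    simp [ht, hbit]

theorem walsh_eq_of_size_le {k N : ℕ} (h : k.size ≤ N) (x : ℕ → ZMod 2) :
    walsh k x = (-1) ^ (∑ i ∈ Finset.range N, (if k.testBit i then 1 else 0) * (x i).val) := by
  unfold walsh
  congr 1
  refine Finset.sum_subset (Finset.range_subset_range.2 h) fun i _ hi => ?_
  have hbit : k.testBit i = false :=
    Nat.testBit_lt_two_pow ((Nat.lt_size_self k).trans_le
      (Nat.pow_le_pow_right two_pos (by simpa using hi)))
  simp [hbit]

theorem walsh_mul_walsh (a b : ℕ) (x : ℕ → ZMod 2) :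
    walsh a x * walsh b x = walsh (a ^^^ b) x := by
  set N := max (max a.size b.size) (a ^^^ b).size
  rw [walsh_eq_of_size_le (k := a) (N := N) (by omega), walsh_eq_of_size_le (k := b) (N := N)
    (by omega), walsh_eq_of_size_le (k := a ^^^ b) (N := N) (by omega)]
  simp only [← Finset.prod_pow_eq_pow_sum, ← Finset.prod_mul_distrib]
  refine Finset.prod_congr rfl fun i _ => ?_
  rw [Nat.testBit_xor]
  cases a.testBit i <;> cases b.testBit i <;> simp [← pow_add]

theorem walsh_two_pow_sub_one_sub {n i : ℕ} (hi : i < 2 ^ n) (x : ℕ → ZMod 2) :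
    walsh (2 ^ n - 1 - i) x = walsh (2 ^ n - 1) x * walsh i x := by
  rw [walsh_mul_walsh, Nat.two_pow_sub_one_xor hi]

theorem walshDirichlet_sub (n j : ℕ) (hj : j < 2^n) (x : ℕ → ZMod 2) :
    walshDirichlet (2^n - j) x =
      walshDirichlet (2^n) x - walsh (2^n - 1) x * walshDirichlet j x := by
  have hpos : 0 < 2 ^ n := Nat.two_pow_pos n
  have hreflect : ∑ i ∈ Finset.range j, walsh (2 ^ n - 1 - i) x =
      ∑ k ∈ Finset.Ico (2 ^ n - j) (2 ^ n), walsh k x := by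
    rw [Finset.range_eq_Ico, Finset.sum_Ico_reflect (walsh · x) 0 (n := 2 ^ n - 1) (by omega)]
    congr 2 <;> omega
  have hfactor : ∑ i ∈ Finset.range j, walsh (2 ^ n - 1 - i) x =
      walsh (2 ^ n - 1) x * walshDirichlet j x := by
    rw [walshDirichlet, Finset.mul_sum]
    exact Finset.sum_congr rfl fun i hi =>
      walsh_two_pow_sub_one_sub ((Finset.mem_range.1 hi).trans hj) x
  rw [walshDirichlet, walshDirichlet,
    ← Finset.sum_range_add_sum_Ico _ (Nat.sub_le (2 ^ n) j), ← hreflect, hfactor]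
  ring
end
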